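/- arXiv:1911.12649 — 3 statements merged into one kernel-verified Lean document; each statement's English description precedes it below -/
import Mathlib

section
/- Let n ≥ 1 and let M ∈ Matₙ(R) be a matrix whose characteristic polynomial is Eisenstein (so M is invertible in Matₙ(F)). If g ∈ GLₙ(F) satisfies g⁻¹·M·g ∈ Matₙ(R), then g = z·h where z ∈ GLₙ(F) commutes with M and h ∈ GLₙ(R). In particular, there exists h ∈ GLₙ(R) such that h⁻¹·M·h = g⁻¹·M·g. -/
/-!
Modulo `𝔪` the characteristic polynomial of `M` becomes `Xⁿ`, so `M̄` is nilpotent. It is even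
regular, `M̄ⁿ⁻¹ ≠ 0`: otherwise `Mⁿ⁻¹ = det M • B`, and comparing determinants would make
`det M = ±a₀` a unit, whereas it is a uniformizer. So some basis vector `v` is cyclic for `M̄`,
the Krylov matrix `(v, Mv, …, Mⁿ⁻¹v)` lies in `GLₙ(R)`, and by Cayley–Hamilton it conjugates `M`
to the companion matrix of its characteristic polynomial. The integral matrix `g⁻¹Mg` has the
same characteristic polynomial, hence is `h⁻¹Mh` for some `h ∈ GLₙ(R)`, and `z = gh⁻¹`
centralises `M`.
-/

open IsLocalRing

/-- A monic polynomial `x^n + a_{n-1}x^{n-1} + ⋯ + a_0 ∈ R[x]` is Eisenstein if all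
lower coefficients lie in `𝔪` and the constant coefficient is not in `𝔪²`. -/
def IsEisensteinPoly (R : Type*) [CommRing R] [IsLocalRing R] (f : Polynomial R) : Prop :=
  f.Monic ∧ (∀ i < f.natDegree, f.coeff i ∈ maximalIdeal R) ∧
    f.coeff 0 ∉ (maximalIdeal R) ^ 2

open Polynomial

namespace Units

variable {α : Type*} [Monoid α]

theorem inv_mul_mul_eq_of_semiconjBy {a b c : α} {P Q : αˣ}
    (hP : SemiconjBy (P : α) c a) (hQ : SemiconjBy (Q : α) c b) :
    ↑(P * Q⁻¹)⁻¹ * a * ↑(P * Q⁻¹) = b := by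
  have hPQ : SemiconjBy ↑(P * Q⁻¹) b a := hP.mul_left hQ.units_inv_symm_left
  rw [mul_assoc, ← hPQ.eq]
  simp [mul_assoc]

theorem commute_mul_inv_of_inv_mul_mul_eq {a : α} {g h : αˣ}
    (H : ↑h⁻¹ * a * h = ↑g⁻¹ * a * g) : Commute ↑(g * h⁻¹) a :=
  calc ↑(g * h⁻¹) * a = g * (↑h⁻¹ * a * h) * ↑h⁻¹ := by simp [mul_assoc]
    _ = g * (↑g⁻¹ * a * g) * ↑h⁻¹ := by rw [H]
    _ = a * ↑(g * h⁻¹) := by simp [mul_assoc]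

end Units

theorem irreducible_of_mem_maximalIdeal_of_notMem_sq {R : Type*} [CommRing R] [IsDomain R]
    [IsDiscreteValuationRing R] {x : R} (hx : x ∈ maximalIdeal R)
    (hx2 : x ∉ maximalIdeal R ^ 2) : Irreducible x := by
  obtain ⟨ϖ, hϖ⟩ := IsDiscreteValuationRing.exists_irreducible R
  have hm := (IsDiscreteValuationRing.irreducible_iff_uniformizer ϖ).mp hϖ
  obtain ⟨c, rfl⟩ := Ideal.mem_span_singleton'.mp (hm ▸ hx)
  have hc : IsUnit c := by
    by_contra hc
    exact hx2 (pow_two (maximalIdeal R) ▸ Ideal.mul_mem_mul ((mem_maximalIdeal _).mpr hc)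
      (hm ▸ Ideal.mem_span_singleton_self ϖ))
  exact (irreducible_isUnit_mul hc).mpr hϖ

theorem IsEisensteinPoly.map_residue {R : Type*} [CommRing R] [IsLocalRing R] {f : R[X]}
    (hf : IsEisensteinPoly R f) : f.map (residue R) = X ^ f.natDegree := by
  ext i
  rw [coeff_map, coeff_X_pow]
  rcases lt_trichotomy i f.natDegree with h | rfl | h
  · rw [if_neg h.ne, residue_eq_zero_iff]
    exact hf.2.1 i h
  · rw [if_pos rfl, ← leadingCoeff, hf.1.leadingCoeff, map_one]
  · rw [if_neg h.ne', coeff_eq_zero_of_natDegree_lt h, map_zero]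

namespace Matrix

variable {R : Type*} [CommRing R] {n : ℕ}

/-- The companion matrix of `f` in size `n`: `eₗ ↦ eₗ₊₁` for `l + 1 < n`, and the last basis
vector goes to `-(f₀, …, fₙ₋₁)`. -/
def companion (n : ℕ) (f : R[X]) : Matrix (Fin n) (Fin n) R :=
  of fun i l => if (l : ℕ) + 1 = n then -f.coeff i else if (i : ℕ) = l + 1 then 1 else 0

def krylov (M : Matrix (Fin n) (Fin n) R) (v : Fin n → R) : Matrix (Fin n) (Fin n) R :=
  of fun r l => (M ^ (l : ℕ) *ᵥ v) r

theorem pow_eq_neg_sum_charpoly_coeff [Nontrivial R] (M : Matrix (Fin n) (Fin n) R) :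
    M ^ n = -∑ t : Fin n, M.charpoly.coeff t • M ^ (t : ℕ) := by
  have h := M.aeval_self_charpoly
  rw [(charpoly_monic M).as_sum, charpoly_natDegree_eq_dim, Fintype.card_fin] at h
  rw [eq_neg_iff_add_eq_zero, Fin.sum_univ_eq_sum_range (fun t => M.charpoly.coeff t • M ^ t)]
  simpa [Algebra.smul_def] using h

theorem mul_krylov [Nontrivial R] (M : Matrix (Fin n) (Fin n) R) (v : Fin n → R) :
    M * krylov M v = krylov M v * companion n M.charpoly := by
  ext r l
  have lhs : (M * krylov M v) r l = (M ^ ((l : ℕ) + 1) *ᵥ v) r := by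
    rw [pow_succ', ← mulVec_mulVec]; rfl
  rw [lhs, mul_apply]
  by_cases hl : (l : ℕ) + 1 = n
  · simp only [hl, pow_eq_neg_sum_charpoly_coeff, neg_mulVec, sum_mulVec, smul_mulVec]
    simp [krylov, companion, hl, Finset.sum_apply, mul_comm]
  · rw [Finset.sum_eq_single ⟨(l : ℕ) + 1, by omega⟩]
    · simp [krylov, companion, hl]
    · intro t _ ht
      have : (t : ℕ) ≠ l + 1 := fun h => ht (Fin.ext h)
      simp [companion, hl, this]
    · simp

theorem krylov_mulVec (M : Matrix (Fin n) (Fin n) R) (v c : Fin n → R) :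
    krylov M v *ᵥ c = ∑ l, c l • (M ^ (l : ℕ) *ᵥ v) := by
  ext r
  simp [krylov, mulVec, dotProduct, Finset.sum_apply, mul_comm]

theorem krylov_map {S : Type*} [CommRing S] (f : R →+* S) (M : Matrix (Fin n) (Fin n) R)
    (v : Fin n → R) : (krylov M v).map f = krylov (M.map f) (f ∘ v) := by
  ext r l
  simp only [map_apply, krylov, of_apply, RingHom.map_mulVec]
  rw [← f.mapMatrix_apply, map_pow, f.mapMatrix_apply]

theorem det_krylov_ne_zero {K : Type*} [Field K] {A : Matrix (Fin n) (Fin n) K}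
    {v : Fin n → K} (hA : A ^ n = 0) (hv : A ^ (n - 1) *ᵥ v ≠ 0) : (krylov A v).det ≠ 0 := by
  classical
  intro hdet
  obtain ⟨c, hc0, hc⟩ := exists_mulVec_eq_zero_iff.mpr hdet
  obtain ⟨l₀, hl₀, hmin⟩ := (Finset.univ.filter (c · ≠ 0)).exists_min_image id
    (by simpa [Finset.filter_nonempty_iff, funext_iff] using hc0)
  simp only [Finset.mem_filter, Finset.mem_univ, true_and, id] at hl₀ hmin
  -- `A ^ (n - 1 - l₀)` kills every term of `∑ c l • A ^ l v` but the `l₀`-th one: the earlier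
  -- coefficients vanish by minimality of `l₀`, the later powers by nilpotency.
  have key : A ^ (n - 1 - l₀) *ᵥ (krylov A v *ᵥ c) = c l₀ • (A ^ (n - 1) *ᵥ v) := by
    rw [krylov_mulVec, mulVec_sum, Finset.sum_eq_single l₀]
    · rw [mulVec_smul, mulVec_mulVec, ← pow_add, Nat.sub_add_cancel (by omega)]
    · intro l _ hl
      by_cases hcl : c l = 0
      · simp [hcl]
      · have hlt := (hmin l hcl).lt_of_ne' hl
        rw [mulVec_smul, mulVec_mulVec, ← pow_add, pow_eq_zero_of_le (by omega) hA,
          zero_mulVec, smul_zero]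
    · simp
  rw [hc, mulVec_zero, eq_comm, smul_eq_zero] at key
  exact key.elim hl₀ hv

theorem charpoly_eq_of_map_eq_conj {S : Type*} [CommRing S] {m : Type*} [Fintype m]
    [DecidableEq m] {f : R →+* S} (hf : Function.Injective f) {M N : Matrix m m R}
    {P Q : Matrix m m S} (hQP : Q * P = 1) (h : N.map f = P * M.map f * Q) :
    N.charpoly = M.charpoly := by
  apply Polynomial.map_injective f hf
  rw [← charpoly_map, ← charpoly_map, h, charpoly_mul_comm, ← mul_assoc, hQP, one_mul]

theorem pow_map_residue_eq_zero [IsLocalRing R] {M : Matrix (Fin n) (Fin n) R}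
    (hM : IsEisensteinPoly R M.charpoly) : M.map (residue R) ^ n = 0 := by
  have h := (M.map (residue R)).aeval_self_charpoly
  rwa [charpoly_map, hM.map_residue, charpoly_natDegree_eq_dim, Fintype.card_fin,
    aeval_X_pow] at h

section DiscreteValuationRing

variable [IsDomain R] [IsDiscreteValuationRing R]

theorem irreducible_det {M : Matrix (Fin n) (Fin n) R} (hM : IsEisensteinPoly R M.charpoly)
    (hn : n ≠ 0) : Irreducible M.det := by
  rw [det_eq_sign_charpoly_coeff, irreducible_isUnit_mul (isUnit_neg_one.pow _)]
  refine irreducible_of_mem_maximalIdeal_of_notMem_sq (hM.2.1 0 ?_) hM.2.2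
  simpa [Nat.pos_iff_ne_zero] using hn

theorem pow_pred_map_residue_ne_zero {M : Matrix (Fin n) (Fin n) R} (hd : Irreducible M.det)
    (hn : n ≠ 0) : M.map (residue R) ^ (n - 1) ≠ 0 := by
  intro h
  have hdvd : ∀ i j, M.det ∣ (M ^ (n - 1)) i j := fun i j => by
    rw [← Ideal.mem_span_singleton, ← (IsDiscreteValuationRing.irreducible_iff_uniformizer _).mp hd,
      ← residue_eq_zero_iff]
    change ((residue R).mapMatrix (M ^ (n - 1))) i j = 0
    rw [map_pow, RingHom.mapMatrix_apply, h, zero_apply]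
  choose B hB using hdvd
  have hMB : M ^ (n - 1) = M.det • of B := ext hB
  have hcancel : M.det ^ (n - 1) * 1 = M.det ^ (n - 1) * (M.det * (of B).det) :=
    calc M.det ^ (n - 1) * 1 = (M ^ (n - 1)).det := by rw [mul_one, det_pow]
      _ = M.det ^ n * (of B).det := by rw [hMB, det_smul, Fintype.card_fin]
      _ = _ := by rw [← mul_assoc, ← pow_succ, Nat.sub_add_cancel (Nat.one_le_iff_ne_zero.mpr hn)]
  exact hd.not_isUnit (.of_mul_eq_one _ (mul_left_cancel₀ (pow_ne_zero _ hd.ne_zero) hcancel).symm)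

theorem exists_mul_eq_mul_companion (M : Matrix (Fin n) (Fin n) R)
    (hM : IsEisensteinPoly R M.charpoly) :
    ∃ P : GL (Fin n) R, M * P = P * companion n M.charpoly := by
  rcases Nat.eq_zero_or_pos n with rfl | hn
  · exact ⟨1, Subsingleton.elim _ _⟩
  have hpow := pow_pred_map_residue_ne_zero (irreducible_det hM hn.ne') hn.ne'
  obtain ⟨j, hj⟩ : ∃ j, M.map (residue R) ^ (n - 1) *ᵥ Pi.single j 1 ≠ 0 := by
    contrapose! hpow
    ext i j
    simpa using congrFun (hpow j) i
  have hv : residue R ∘ Pi.single j 1 = Pi.single j 1 := by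
    ext i
    simp [Pi.single_apply, apply_ite]
  have hunit : IsUnit (krylov M (Pi.single j 1)).det := by
    rw [← residue_ne_zero_iff_isUnit, RingHom.map_det, RingHom.mapMatrix_apply, krylov_map, hv]
    exact det_krylov_ne_zero (pow_map_residue_eq_zero hM) hj
  exact ⟨((isUnit_iff_isUnit_det _).mpr hunit).unit, mul_krylov M _⟩

end DiscreteValuationRing

end Matrix

theorem conj_into_matR_of_eisenstein_general
    (R : Type*) [CommRing R] [IsDomain R] [IsDiscreteValuationRing R]
    (F : Type*) [Field F] [Algebra R F] [IsFractionRing R F]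
    (n : ℕ) (M : Matrix (Fin n) (Fin n) R)
    (hM : IsEisensteinPoly R M.charpoly)
    (g : GL (Fin n) F)
    (hg : ∀ i j : Fin n, ∃ r : R,
      (((g⁻¹ : GL (Fin n) F) : Matrix (Fin n) (Fin n) F) * M.map (algebraMap R F) *
        (g : Matrix (Fin n) (Fin n) F)) i j = algebraMap R F r) :
    ∃ z : GL (Fin n) F,
      (z : Matrix (Fin n) (Fin n) F) * M.map (algebraMap R F) =
        M.map (algebraMap R F) * (z : Matrix (Fin n) (Fin n) F) ∧
      ∃ h hinv : Matrix (Fin n) (Fin n) R, h * hinv = 1 ∧ hinv * h = 1 ∧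
        (g : Matrix (Fin n) (Fin n) F) =
          (z : Matrix (Fin n) (Fin n) F) * h.map (algebraMap R F) ∧
        hinv.map (algebraMap R F) * M.map (algebraMap R F) * h.map (algebraMap R F) =
          ((g⁻¹ : GL (Fin n) F) : Matrix (Fin n) (Fin n) F) * M.map (algebraMap R F) *
            (g : Matrix (Fin n) (Fin n) F) := by
  choose N hN using hg
  have hNF : (Matrix.of N).map (algebraMap R F) =
      ((g⁻¹ : GL (Fin n) F) : Matrix (Fin n) (Fin n) F) * M.map (algebraMap R F) * g :=
    Matrix.ext fun i j => (hN i j).symm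
  have hcharpoly :=
    Matrix.charpoly_eq_of_map_eq_conj (IsFractionRing.injective R F) g.mul_inv hNF
  obtain ⟨P, hP⟩ := M.exists_mul_eq_mul_companion hM
  obtain ⟨Q, hQ⟩ := (Matrix.of N).exists_mul_eq_mul_companion (hcharpoly ▸ hM)
  rw [hcharpoly] at hQ
  set h : GL (Fin n) R := P * Q⁻¹
  set hF : GL (Fin n) F := Units.map (algebraMap R F).mapMatrix.toMonoidHom h
  have hconjF : ((hF⁻¹ : GL (Fin n) F) : Matrix (Fin n) (Fin n) F) * M.map (algebraMap R F) * hF =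
      ((g⁻¹ : GL (Fin n) F) : Matrix (Fin n) (Fin n) F) * M.map (algebraMap R F) * g := by
    rw [← hNF, ← Units.inv_mul_mul_eq_of_semiconjBy hP.symm hQ.symm]
    simp [hF, h, Matrix.map_mul]
  exact ⟨g * hF⁻¹, Units.commute_mul_inv_of_inv_mul_mul_eq hconjF, h, ↑h⁻¹, h.mul_inv,
    h.inv_mul, (Units.inv_mul_cancel_right _ hF).symm, hconjF⟩

/-- If `M ∈ Matₙ(R)` has Eisenstein characteristic polynomial and
`g ∈ GLₙ(F)` satisfies `g⁻¹·M·g ∈ Matₙ(R)`, then `g = z·h` with `z` commuting with `M`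
and `h ∈ GLₙ(R)`; in particular some `h ∈ GLₙ(R)` satisfies `h⁻¹·M·h = g⁻¹·M·g`. -/
theorem conj_into_matR_of_eisenstein
    (R : Type*) [CommRing R] [IsDomain R] [IsDiscreteValuationRing R]
    (F : Type*) [Field F] [Algebra R F] [IsFractionRing R F]
    (ϖ : R) (hϖ : Ideal.span {ϖ} = maximalIdeal R)
    (n : ℕ) (hn : 1 ≤ n) (M : Matrix (Fin n) (Fin n) R)
    (hM : IsEisensteinPoly R M.charpoly)
    (g : GL (Fin n) F)
    (hg : ∀ i j : Fin n, ∃ r : R,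
      (((g⁻¹ : GL (Fin n) F) : Matrix (Fin n) (Fin n) F) * M.map (algebraMap R F) *
        (g : Matrix (Fin n) (Fin n) F)) i j = algebraMap R F r) :
    ∃ z : GL (Fin n) F,
      (z : Matrix (Fin n) (Fin n) F) * M.map (algebraMap R F) =
        M.map (algebraMap R F) * (z : Matrix (Fin n) (Fin n) F) ∧
      ∃ h hinv : Matrix (Fin n) (Fin n) R, h * hinv = 1 ∧ hinv * h = 1 ∧
        (g : Matrix (Fin n) (Fin n) F) =
          (z : Matrix (Fin n) (Fin n) F) * h.map (algebraMap R F) ∧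
        hinv.map (algebraMap R F) * M.map (algebraMap R F) * h.map (algebraMap R F) =
          ((g⁻¹ : GL (Fin n) F) : Matrix (Fin n) (Fin n) F) * M.map (algebraMap R F) *
            (g : Matrix (Fin n) (Fin n) F) :=
  conj_into_matR_of_eisenstein_general R F n M hM g hg
end

section
/- Let n ≥ 1 and let M ∈ Matₙ(R) be a matrix whose characteristic polynomial f is Eisenstein. Then M is GLₙ(R)-conjugate to the companion matrix of f: there exists h ∈ GLₙ(R) with h⁻¹·M·h = C(f). -/
/-!
Reducing modulo `𝔪`, the characteristic polynomial becomes `Xⁿ`, so `M̄` is nilpotent. It is a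
single Jordan block: if `M̄ⁿ⁻¹ = 0`, all entries of `Mⁿ⁻¹` lie in `𝔪`, so `det(M)ⁿ⁻¹ ∈ 𝔪ⁿ`, which is
impossible because `det M = ±f(0)` has valuation `1`. Choosing `v` with `M̄ⁿ⁻¹ v̄ ≠ 0`, the vectors
`v̄, M̄v̄, …, M̄ⁿ⁻¹v̄` are a basis, so the Krylov matrix `h = (v | Mv | ⋯ | Mⁿ⁻¹v)` lies in
`GLₙ(R)`, and Cayley–Hamilton gives `M h = h C(f)`.
-/

open IsLocalRing

/-- The companion matrix of a monic polynomial `f = x^n + a_{n-1}x^{n-1} + ⋯ + a_0`: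
`(i+1, i)`-entries `1`, last column `(i, n)`-entry `-a_{i-1}`, other entries `0`. -/
def companionMatrix {R : Type*} [CommRing R] (n : ℕ) (f : Polynomial R) :
    Matrix (Fin n) (Fin n) R :=
  Matrix.of fun i j => if (i : ℕ) = (j : ℕ) + 1 then 1
    else if (j : ℕ) = n - 1 then -f.coeff i else 0

open Polynomial Matrix

theorem Matrix.det_mem_pow_card_of_forall_mem {R ι : Type*} [CommRing R] [Fintype ι]
    [DecidableEq ι] {I : Ideal R} {A : Matrix ι ι R} (h : ∀ i j, A i j ∈ I) :
    A.det ∈ I ^ Fintype.card ι := by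
  rw [det_apply]
  refine Ideal.sum_mem _ fun σ _ => ?_
  have hprod : ∏ i, A (σ i) i ∈ I ^ Fintype.card ι := by
    have h' := Ideal.prod_mem_prod (s := Finset.univ) (I := fun _ => I) fun i _ => h (σ i) i
    rwa [Finset.prod_const, Finset.card_univ] at h'
  rcases Int.units_eq_one_or (Equiv.Perm.sign σ) with hσ | hσ <;>
    simp [hσ, hprod, Units.smul_def]

theorem Matrix.det_mem_iff_charpoly_coeff_zero_mem {R ι : Type*} [CommRing R] [Fintype ι]
    [DecidableEq ι] {I : Ideal R} (A : Matrix ι ι R) :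
    A.det ∈ I ↔ A.charpoly.coeff 0 ∈ I := by
  rw [A.det_eq_sign_charpoly_coeff, Ideal.unit_mul_mem_iff_mem _ ((isUnit_neg_one).pow _)]

theorem IsDiscreteValuationRing.pow_notMem_maximalIdeal_pow_succ {R : Type*} [CommRing R]
    [IsDomain R] [IsDiscreteValuationRing R] {a : R} (ha : a ∉ IsLocalRing.maximalIdeal R ^ 2)
    (k : ℕ) : a ^ k ∉ IsLocalRing.maximalIdeal R ^ (k + 1) := by
  obtain ⟨ϖ, hϖ⟩ := exists_irreducible R
  have ha0 : a ≠ 0 := by rintro rfl; exact ha (zero_mem _)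
  obtain ⟨m, hm⟩ := ENat.ne_top_iff_exists.mp ((addVal_eq_top_iff (R := R)).not.mpr ha0)
  rw [hϖ.maximalIdeal_eq, Ideal.span_singleton_pow, Ideal.mem_span_singleton,
    ← addVal_le_iff_dvd, hϖ.addVal_pow] at ha ⊢
  rw [← hm, Nat.cast_le] at ha
  rw [addVal_pow, ← hm, nsmul_eq_mul, ← Nat.cast_mul, Nat.cast_le]
  nlinarith

theorem Matrix.map_residue_pow_ne_zero_of_det_notMem_sq {R ι : Type*} [CommRing R] [IsDomain R]
    [IsDiscreteValuationRing R] [Fintype ι] [DecidableEq ι] {k : ℕ} (hι : Fintype.card ι = k + 1)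
    {A : Matrix ι ι R} (hA : A.det ∉ maximalIdeal R ^ 2) : A.map (residue R) ^ k ≠ 0 := by
  rw [← Matrix.map_pow]
  intro h
  refine IsDiscreteValuationRing.pow_notMem_maximalIdeal_pow_succ hA k ?_
  rw [← det_pow, ← hι]
  exact det_mem_pow_card_of_forall_mem fun i j => (residue_eq_zero_iff _).mp congr($h i j)

theorem Matrix.map_residue_pow_card_eq_zero {R ι : Type*} [CommRing R] [IsLocalRing R]
    [Fintype ι] [DecidableEq ι] {A : Matrix ι ι R}
    (hA : A.charpoly.IsDistinguishedAt (maximalIdeal R)) :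
    A.map (residue R) ^ Fintype.card ι = 0 := by
  have hX : A.charpoly.map (residue R) = X ^ Fintype.card ι := by
    rw [← A.charpoly_natDegree_eq_dim]
    exact hA.map_eq_X_pow
  simpa [charpoly_map, hX] using (A.map (residue R)).aeval_self_charpoly

theorem IsEisensteinPoly.isDistinguishedAt {R : Type*} [CommRing R] [IsLocalRing R] {f : R[X]}
    (hf : IsEisensteinPoly R f) : f.IsDistinguishedAt (maximalIdeal R) :=
  ⟨⟨hf.2.1 _⟩, hf.1⟩

theorem Module.End.linearIndependent_pow_apply {K V : Type*} [Ring K] [IsDomain K]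
    [AddCommGroup V] [Module K V] [Module.IsTorsionFree K V] {T : Module.End K V} {x : V} {k : ℕ}
    (hk : (T ^ k) x = 0) (hk' : (T ^ (k - 1)) x ≠ 0) :
    LinearIndependent K fun i : Fin k => (T ^ (i : ℕ)) x := by
  rw [Fintype.linearIndependent_iff]
  intro g hg
  suffices ∀ m (i : Fin k), (i : ℕ) = m → g i = 0 from fun i => this i i rfl
  intro m
  induction m using Nat.strong_induction_on with
  | _ m ih =>
    rintro i rfl
    have key : g i • (T ^ (k - 1)) x = 0 := by
      have h := congrArg (T ^ (k - 1 - i)) hg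
      rw [map_sum, map_zero, Finset.sum_eq_single i] at h
      · rwa [map_smul, ← Module.End.mul_apply, ← pow_add, Nat.sub_add_cancel (by omega)] at h
      · intro j _ hji
        rcases lt_or_gt_of_ne (Fin.val_ne_of_ne hji) with hlt | hgt
        · simp [ih j hlt j rfl]
        · rw [map_smul, ← Module.End.mul_apply, ← pow_add,
            Module.End.pow_map_zero_of_le (by omega) hk, smul_zero]
      · simp
    exact (smul_eq_zero_iff_left hk').mp key

theorem Polynomial.Monic.pow_natDegree_eq_of_aeval_eq_zero {R S : Type*} [CommRing R] [Ring S]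
    [Algebra R S] {f : R[X]} (hf : f.Monic) {x : S} (hx : aeval x f = 0) :
    x ^ f.natDegree = -∑ i ∈ Finset.range f.natDegree, f.coeff i • x ^ i := by
  rw [aeval_eq_sum_range, Finset.sum_range_succ, hf.coeff_natDegree, one_smul] at hx
  exact eq_neg_of_add_eq_zero_right hx

def Matrix.krylov_s9 {R ι : Type*} [CommSemiring R] [Fintype ι] [DecidableEq ι]
    (A : Matrix ι ι R) (v : ι → R) (n : ℕ) : Matrix ι (Fin n) R :=
  Matrix.of fun i j => (A ^ (j : ℕ) *ᵥ v) i

namespace Matrix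

variable {R ι : Type*} [CommRing R] [Fintype ι] [DecidableEq ι]

theorem map_krylov {S : Type*} [CommRing S] (f : R →+* S) (A : Matrix ι ι R) (v : ι → R)
    (n : ℕ) : (A.krylov_s9 v n).map f = (A.map f).krylov_s9 (f ∘ v) n := by
  ext i j
  simp [krylov_s9, RingHom.map_mulVec, ← Matrix.map_pow]

theorem isUnit_krylov {K : Type*} [Field K] {n : ℕ} {A : Matrix (Fin n) (Fin n) K}
    {v : Fin n → K} (hv : A ^ n *ᵥ v = 0) (hv' : A ^ (n - 1) *ᵥ v ≠ 0) :
    IsUnit (A.krylov_s9 v n) := by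
  rw [← linearIndependent_cols_iff_isUnit]
  have := Module.End.linearIndependent_pow_apply (T := toLin' A) (x := v) (k := n)
    (by rwa [← toLin'_pow, toLin'_apply]) (by rwa [← toLin'_pow, toLin'_apply])
  simp only [← toLin'_pow, toLin'_apply] at this
  exact this

theorem mul_krylov_apply (A : Matrix ι ι R) (v : ι → R) (n : ℕ) (i : ι) (j : Fin n) :
    (A * A.krylov_s9 v n) i j = (A ^ ((j : ℕ) + 1) *ᵥ v) i := by
  rw [pow_succ', ← mulVec_mulVec]
  rfl

theorem mul_krylov_s9 {f : R[X]} {n : ℕ} {A : Matrix ι ι R} (hf : f.Monic) (hdeg : f.natDegree = n)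
    (hA : aeval A f = 0) (v : ι → R) :
    A * A.krylov_s9 v n = A.krylov_s9 v n * companionMatrix n f := by
  ext i j
  rw [mul_krylov_apply, mul_apply]
  by_cases hj : (j : ℕ) + 1 = n
  · have hC : ∀ t : Fin n, companionMatrix n f t j = -f.coeff t := fun t => by
      have := t.isLt
      simp only [companionMatrix, of_apply, if_neg (by omega : (t : ℕ) ≠ j + 1),
        if_pos (by omega : (j : ℕ) = n - 1)]
    subst hdeg
    simp only [hC, hj, hf.pow_natDegree_eq_of_aeval_eq_zero hA, neg_mulVec, sum_mulVec, smul_mulVec]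
    rw [← Fin.sum_univ_eq_sum_range (fun t => f.coeff t • A ^ t *ᵥ v)]
    simp [krylov_s9, Finset.sum_apply, mul_comm]
  · have hj' : (j : ℕ) + 1 < n := by omega
    rw [Finset.sum_eq_single ⟨(j : ℕ) + 1, hj'⟩]
    · simp [companionMatrix, krylov_s9]
    · intro t _ ht
      have ht' : (t : ℕ) ≠ (j : ℕ) + 1 := fun h => ht (Fin.ext h)
      simp [companionMatrix, ht', show (j : ℕ) ≠ n - 1 by omega]
    · simp

end Matrix

/-- A matrix over `R` whose characteristic polynomial `f` is Eisenstein
is `GLₙ(R)`-conjugate to the companion matrix of `f`. -/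
theorem eisenstein_conjugate_to_companion
    (R : Type*) [CommRing R] [IsDomain R] [IsDiscreteValuationRing R]
    (n : ℕ) (hn : 1 ≤ n) (M : Matrix (Fin n) (Fin n) R)
    (hM : IsEisensteinPoly R M.charpoly) :
    ∃ h hinv : Matrix (Fin n) (Fin n) R, h * hinv = 1 ∧ hinv * h = 1 ∧
      hinv * M * h = companionMatrix n M.charpoly := by
  have hnil : M.map (residue R) ^ n = 0 := by
    simpa using M.map_residue_pow_card_eq_zero hM.isDistinguishedAt
  have hne : M.map (residue R) ^ (n - 1) ≠ 0 :=
    map_residue_pow_ne_zero_of_det_notMem_sq (by simp; omega)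
      (M.det_mem_iff_charpoly_coeff_zero_mem.not.mpr hM.2.2)
  obtain ⟨w, hw⟩ : ∃ w, M.map (residue R) ^ (n - 1) *ᵥ w ≠ 0 := by
    by_contra! h
    exact hne (ext_of_mulVec_single fun i => by rw [h, zero_mulVec])
  obtain ⟨v, rfl⟩ := residue_surjective.comp_left w
  have hK : IsUnit (M.krylov_s9 v n).det := by
    rw [← isUnit_map_iff (residue R), RingHom.map_det, RingHom.mapMatrix_apply, map_krylov,
      ← isUnit_iff_isUnit_det]
    exact isUnit_krylov (by simp [hnil]) hw
  refine ⟨_, _, mul_nonsing_inv _ hK, nonsing_inv_mul _ hK, ?_⟩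
  rw [Matrix.mul_assoc, mul_krylov_s9 hM.1 (by simp) M.aeval_self_charpoly, ← Matrix.mul_assoc,
    nonsing_inv_mul _ hK, Matrix.one_mul]
end

section
/- Let n ≥ 1 and let M ∈ Matₙ(R) be a matrix whose characteristic polynomial is Eisenstein. Let F[M] ⊆ Matₙ(F) be the F-subalgebra generated by M and let R[M] ⊆ Matₙ(F) be the R-subalgebra generated by M. Then R[M] equals the R-span of 1, M, M², …, M^{n−1}, and an element x ∈ F[M] is integral over R if and only if x ∈ R[M]; that is, R[M] is the integral closure of R in F[M]. -/
open IsLocalRing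

/-!
The characteristic polynomial `P` of `M` is irreducible over `R` by Eisenstein's criterion, hence
over `F` by Gauss's lemma, so `F[M] ≅ F[X]/(P)` is a field in which `M` generates a power basis
and `P` is the minimal polynomial of `M` over `R`. Any `z ∈ F[M]` has a multiple `ϖ^k • z` in
`R[M]` (clear denominators and split off the unit). If `z` is integral, the Eisenstein condition
allows dividing by `ϖ` inside `R[M]` one factor at a time
(`mem_adjoin_of_smul_prime_pow_smul_of_minpoly_isEisensteinAt`), so `z ∈ R[M]`.
-/

open Polynomial

theorem IsEisensteinPoly.isEisensteinAt {R : Type*} [CommRing R] [IsLocalRing R] {f : R[X]}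
    (hf : IsEisensteinPoly R f) : f.IsEisensteinAt (maximalIdeal R) :=
  ⟨by rw [hf.1.leadingCoeff]; exact notMem_maximalIdeal.mpr isUnit_one, hf.2.1 _, hf.2.2⟩

theorem IsEisensteinPoly.irreducible {R : Type*} [CommRing R] [IsDomain R] [IsLocalRing R]
    {f : R[X]} (hf : IsEisensteinPoly R f) (hd : 0 < f.natDegree) : Irreducible f :=
  hf.isEisensteinAt.irreducible (maximalIdeal.isMaximal R).isPrime hf.1.isPrimitive hd

theorem IsLocalization.exists_smul_mem_adjoin_singleton {R S A : Type*} [CommRing R] [CommRing S]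
    [Algebra R S] (M : Submonoid R) [IsLocalization M S] [Semiring A] [Algebra S A] [Algebra R A]
    [IsScalarTower R S A] {x z : A} (hz : z ∈ Algebra.adjoin S {x}) :
    ∃ m ∈ M, m • z ∈ Algebra.adjoin R {x} := by
  obtain ⟨f, rfl⟩ := (Algebra.adjoin_singleton_eq_range_aeval S x) ▸ hz
  obtain ⟨m, hmM, hm⟩ := integerNormalization_spec M f
  refine ⟨m, hmM, ?_⟩
  have : m • aeval x f = aeval x (integerNormalization M f) := by
    rw [← aeval_map_algebraMap S x (integerNormalization M f), hm, (aeval x).map_smul_of_tower]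
  exact this ▸ aeval_mem_adjoin_singleton R x

theorem AdjoinRoot.minpoly_root_map_of_monic {R F : Type*} [CommRing R] [IsDomain R]
    [IsIntegrallyClosed R] [Field F] [Algebra R F] [IsFractionRing R F] {P : R[X]}
    (hm : P.Monic) [Fact (Irreducible (P.map (algebraMap R F)))] :
    minpoly R (root (P.map (algebraMap R F))) = P := by
  have hint : IsIntegral R (root (P.map (algebraMap R F))) :=
    ⟨P, hm, by rw [← aeval_def, ← aeval_map_algebraMap F, aeval_eq, mk_self]⟩
  apply map_injective _ (IsFractionRing.injective R F)
  rw [← minpoly.isIntegrallyClosed_eq_field_fractions' F hint,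
    minpoly_root (hm.map _).ne_zero, (hm.map _).leadingCoeff, inv_one, C_1, mul_one]

section DiscreteValuationRing

variable {R F : Type*} [CommRing R] [IsDomain R] [IsDiscreteValuationRing R]
  [Field F] [Algebra R F] [IsFractionRing R F]

theorem mem_adjoin_gen_of_isIntegral_of_isEisensteinPoly {L : Type*} [Field L] [Algebra F L]
    [Algebra R L] [IsScalarTower R F L] (B : PowerBasis F L) (hB : IsIntegral R B.gen)
    (hei : IsEisensteinPoly R (minpoly R B.gen)) {z : L} (hz : IsIntegral R z) :
    z ∈ Algebra.adjoin R {B.gen} := by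
  obtain ⟨ϖ, hϖ⟩ := IsDiscreteValuationRing.exists_irreducible R
  obtain ⟨b, hb, hbz⟩ := IsLocalization.exists_smul_mem_adjoin_singleton (nonZeroDivisors R)
    (B.adjoin_gen_eq_top ▸ Algebra.mem_top : z ∈ Algebra.adjoin F {B.gen})
  obtain ⟨k, u, rfl⟩ := IsDiscreteValuationRing.eq_unit_mul_pow_irreducible
    (nonZeroDivisors.ne_zero hb) hϖ
  have hϖz : ϖ ^ k • z ∈ Algebra.adjoin R {B.gen} := by
    have := Subalgebra.smul_mem _ hbz (↑u⁻¹ : R)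
    rwa [smul_smul, ← mul_assoc, Units.inv_mul, one_mul] at this
  have hei' : (minpoly R B.gen).IsEisensteinAt (Ideal.span {ϖ}) :=
    hϖ.maximalIdeal_eq ▸ hei.isEisensteinAt
  exact mem_adjoin_of_smul_prime_pow_smul_of_minpoly_isEisensteinAt hϖ.prime hB hz hϖz hei'

theorem AdjoinRoot.mem_adjoin_root_of_isIntegral_of_isEisensteinPoly {P : R[X]}
    (hP : IsEisensteinPoly R P) (hd : 0 < P.natDegree)
    {z : AdjoinRoot (P.map (algebraMap R F))} (hz : IsIntegral R z) :
    z ∈ Algebra.adjoin R {root (P.map (algebraMap R F))} := by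
  have hm : P.Monic := hP.1
  have : Fact (Irreducible (P.map (algebraMap R F))) :=
    ⟨hm.irreducible_iff_irreducible_map_fraction_map.mp (hP.irreducible hd)⟩
  have hmin : minpoly R (root (P.map (algebraMap R F))) = P := minpoly_root_map_of_monic hm
  rw [← powerBasis_gen (hm.map _).ne_zero] at hmin ⊢
  exact mem_adjoin_gen_of_isIntegral_of_isEisensteinPoly _
    (minpoly.ne_zero_iff.mp (hmin.symm ▸ hm.ne_zero)) (hmin.symm ▸ hP) hz

theorem isIntegral_iff_mem_adjoin_of_isEisensteinPoly {A : Type*} [Ring A] [Algebra F A]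
    [Algebra R A] [IsScalarTower R F A] {P : R[X]} (hP : IsEisensteinPoly R P) {a : A}
    (ha : aeval a P = 0) {x : A} (hx : x ∈ Algebra.adjoin F {a}) :
    IsIntegral R x ↔ x ∈ Algebra.adjoin R {a} := by
  nontriviality A
  have hm : P.Monic := hP.1
  refine ⟨fun hxint => ?_, fun hxR => .of_mem_of_fg _ (IsIntegral.fg_adjoin_singleton
    ⟨P, hm, by rwa [← aeval_def]⟩) x hxR⟩
  have hd : 0 < P.natDegree := by
    refine Nat.pos_of_ne_zero fun h => ?_
    rw [hm.natDegree_eq_zero.mp h, map_one] at ha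
    exact one_ne_zero ha
  have : Fact (Irreducible (P.map (algebraMap R F))) :=
    ⟨hm.irreducible_iff_irreducible_map_fraction_map.mp (hP.irreducible hd)⟩
  let ψ : AdjoinRoot (P.map (algebraMap R F)) →ₐ[F] A :=
    Ideal.Quotient.liftₐ _ (aeval a) fun q hq => by
      obtain ⟨r, rfl⟩ := Ideal.mem_span_singleton'.mp hq
      rw [map_mul, aeval_map_algebraMap, ha, mul_zero]
  have hψroot : ψ (AdjoinRoot.root _) = a := aeval_X a
  have hψinj : Function.Injective (ψ.restrictScalars R) := ψ.toRingHom.injective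
  obtain ⟨y, -, rfl⟩ : x ∈ (Algebra.adjoin F {AdjoinRoot.root _}).map ψ := by
    rwa [AlgHom.map_adjoin_singleton, hψroot]
  rw [← hψroot, ← AlgHom.coe_restrictScalars' (R := R), ← AlgHom.map_adjoin_singleton]
  exact Subalgebra.mem_map.mpr ⟨y, AdjoinRoot.mem_adjoin_root_of_isIntegral_of_isEisensteinPoly hP
    hd ((isIntegral_algHom_iff _ hψinj).mp hxint), rfl⟩

end DiscreteValuationRing

theorem adjoin_eisenstein_integral_closure_general
    (R : Type*) [CommRing R] [IsDomain R] [IsDiscreteValuationRing R]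
    (F : Type*) [Field F] [Algebra R F] [IsFractionRing R F]
    (n : ℕ) (M : Matrix (Fin n) (Fin n) R)
    (hM : IsEisensteinPoly R M.charpoly) :
    (Subalgebra.toSubmodule (Algebra.adjoin R {M.map (algebraMap R F)}) =
      Submodule.span R (Set.range fun i : Fin n => (M.map (algebraMap R F)) ^ (i : ℕ))) ∧
    ∀ x ∈ Algebra.adjoin F {M.map (algebraMap R F)},
      (IsIntegral R x ↔ x ∈ Algebra.adjoin R {M.map (algebraMap R F)}) := by
  have hMF : aeval (M.map (algebraMap R F)) M.charpoly = 0 := by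
    rw [← aeval_map_algebraMap F, ← Matrix.charpoly_map, Matrix.aeval_self_charpoly]
  refine ⟨?_, fun x hx => isIntegral_iff_mem_adjoin_of_isEisensteinPoly hM hMF hx⟩
  rw [← Submodule.span_range_natDegree_eq_adjoin hM.1 hMF, Matrix.charpoly_natDegree_eq_dim,
    Fintype.card_fin]
  congr 1
  ext
  simp [Fin.exists_iff]

/-- If `M ∈ Matₙ(R)` has Eisenstein characteristic polynomial then
`R[M]` equals the `R`-span of `1, M, …, M^{n-1}`, and an element of `F[M]` is integral
over `R` if and only if it lies in `R[M]`. -/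
theorem adjoin_eisenstein_integral_closure
    (R : Type*) [CommRing R] [IsDomain R] [IsDiscreteValuationRing R]
    (F : Type*) [Field F] [Algebra R F] [IsFractionRing R F]
    (n : ℕ) (hn : 1 ≤ n) (M : Matrix (Fin n) (Fin n) R)
    (hM : IsEisensteinPoly R M.charpoly) :
    (Subalgebra.toSubmodule (Algebra.adjoin R {M.map (algebraMap R F)}) =
      Submodule.span R (Set.range fun i : Fin n => (M.map (algebraMap R F)) ^ (i : ℕ))) ∧
    ∀ x ∈ Algebra.adjoin F {M.map (algebraMap R F)},
      (IsIntegral R x ↔ x ∈ Algebra.adjoin R {M.map (algebraMap R F)}) :=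
  adjoin_eisenstein_integral_closure_general R F n M hM
end
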